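/- arXiv:1309.0112 — 3 statements merged into one kernel-verified Lean document; each statement's English description precedes it below -/
import Mathlib

section
/- Let $p$ be a probability vector with $p_i > 0$ for all $i$, and define the rescaled Irwin–Lancaster vectors $v^{(r)}$ for $1 \le r \le d-1$ by $v_j^{(r)} = -(p_{r+1}+\cdots+p_d)/p_r$ if $j = r$, $v_j^{(r)} = 1$ if $j > r$, and $v_j^{(r)} = 0$ if $j < r$. Then for $l \le m < r$, the triple sum $c(l,m,r) = \sum_{j=1}^d v_j^{(l)} v_j^{(m)} v_j^{(r)} p_j$ equals $0$; for $l < m = r$, $c(l,m,r) = (p_{r+1}+\cdots+p_d)^2/p_r + (p_{r+1}+\cdots+p_d) \ge 0$; and for $l = m = r$, $c(r,r,r) = \frac{p_{r+1}+\cdots+p_d}{p_r^2}\big(p_r^2 - (p_{r+1}+\cdots+p_d)^2\big)$. -/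
/-!
The vector `v⁽ʳ⁾` vanishes below `r` and equals `1` above `r`, so for `l ≤ m ≤ r` the triple
sum only sees the coordinates `j ≥ r`: the tail `j > r` contributes `p_{r+1} + ⋯ + p_d`, and the
coordinate `j = r` contributes `v_r⁽ˡ⁾ v_r⁽ᵐ⁾ v_r⁽ʳ⁾ p_r`. Each case is then a one-line computation.
-/

open Finset

theorem Finset.sum_Icc_one_eq_add_sum_Icc_succ {M : Type*} [AddCommMonoid M] {d r : ℕ}
    (g : ℕ → M) (h1 : 1 ≤ r) (h2 : r ≤ d) (hz : ∀ j ∈ Icc 1 d, j < r → g j = 0) :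
    ∑ j ∈ Icc 1 d, g j = g r + ∑ j ∈ Icc (r + 1) d, g j := by
  have hhead : ∑ j ∈ Ico 1 r, g j = 0 :=
    sum_eq_zero fun j hj => by
      simp only [mem_Ico] at hj
      exact hz j (mem_Icc.2 ⟨hj.1, by omega⟩) hj.2
  rw [← Ico_add_one_right_eq_Icc, ← sum_Ico_consecutive g h1 (by omega : r ≤ d + 1), hhead,
    zero_add, Ico_add_one_right_eq_Icc, Icc_add_one_left_eq_Ioc, add_sum_Ioc_eq_sum_Icc h2]

def IsIrwinLancaster (d : ℕ) (p : ℕ → ℝ) (v : ℕ → ℕ → ℝ) : Prop :=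
  ∀ r ∈ Icc 1 (d - 1), ∀ j ∈ Icc 1 d,
    v r j = if j < r then 0 else if j = r then -(∑ i ∈ Icc (r + 1) d, p i) / p r else 1

namespace IsIrwinLancaster

variable {d : ℕ} {p : ℕ → ℝ} {v : ℕ → ℕ → ℝ} {l m r j : ℕ}

theorem apply_eq_zero_of_lt (hv : IsIrwinLancaster d p v) (hr : r ∈ Icc 1 (d - 1))
    (hj : j ∈ Icc 1 d) (hjr : j < r) : v r j = 0 := by
  rw [hv r hr j hj, if_pos hjr]

theorem apply_eq_one_of_lt (hv : IsIrwinLancaster d p v) (hr : r ∈ Icc 1 (d - 1))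
    (hj : j ∈ Icc 1 d) (hrj : r < j) : v r j = 1 := by
  rw [hv r hr j hj, if_neg (by omega), if_neg (by omega)]

theorem apply_self (hv : IsIrwinLancaster d p v) (hr : r ∈ Icc 1 (d - 1)) :
    v r r = -(∑ i ∈ Icc (r + 1) d, p i) / p r := by
  have hr' := mem_Icc.1 hr
  rw [hv r hr r (mem_Icc.2 ⟨hr'.1, by omega⟩), if_neg (lt_irrefl r), if_pos rfl]

theorem sum_mul_mul_mul (hv : IsIrwinLancaster d p v) (hl : l ∈ Icc 1 (d - 1))
    (hm : m ∈ Icc 1 (d - 1)) (hr : r ∈ Icc 1 (d - 1)) (hlm : l ≤ m) (hmr : m ≤ r) :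
    ∑ j ∈ Icc 1 d, v l j * v m j * v r j * p j =
      v l r * v m r * v r r * p r + ∑ i ∈ Icc (r + 1) d, p i := by
  have hr' := mem_Icc.1 hr
  rw [sum_Icc_one_eq_add_sum_Icc_succ _ hr'.1 (by omega) fun j hj hjr => by
    rw [hv.apply_eq_zero_of_lt hr hj hjr, mul_zero, zero_mul]]
  congr 1
  refine sum_congr rfl fun j hj => ?_
  have hj' : j ∈ Icc 1 d := mem_Icc.2 ⟨by grind, (mem_Icc.1 hj).2⟩
  have hrj : r < j := by grind
  rw [hv.apply_eq_one_of_lt hl hj' (by omega), hv.apply_eq_one_of_lt hm hj' (by omega),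
    hv.apply_eq_one_of_lt hr hj' hrj, one_mul, one_mul, one_mul]

end IsIrwinLancaster

theorem stmt7_general (d : ℕ) (p : ℕ → ℝ) (v : ℕ → ℕ → ℝ)
    (hp : ∀ i ∈ Finset.Icc 1 d, 0 < p i)
    (hv : ∀ r ∈ Finset.Icc 1 (d - 1), ∀ j ∈ Finset.Icc 1 d,
      v r j = if j < r then 0
        else if j = r then -(∑ i ∈ Finset.Icc (r + 1) d, p i) / p r
        else 1) :
    (∀ l ∈ Finset.Icc 1 (d - 1), ∀ m ∈ Finset.Icc 1 (d - 1),
      ∀ r ∈ Finset.Icc 1 (d - 1), l ≤ m → m < r →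
      ∑ j ∈ Finset.Icc 1 d, v l j * v m j * v r j * p j = 0) ∧
    (∀ l ∈ Finset.Icc 1 (d - 1), ∀ r ∈ Finset.Icc 1 (d - 1), l < r →
      ∑ j ∈ Finset.Icc 1 d, v l j * v r j * v r j * p j =
        (∑ i ∈ Finset.Icc (r + 1) d, p i) ^ 2 / p r +
          (∑ i ∈ Finset.Icc (r + 1) d, p i) ∧
      0 ≤ ∑ j ∈ Finset.Icc 1 d, v l j * v r j * v r j * p j) ∧
    (∀ r ∈ Finset.Icc 1 (d - 1),
      ∑ j ∈ Finset.Icc 1 d, v r j * v r j * v r j * p j =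
        (∑ i ∈ Finset.Icc (r + 1) d, p i) / p r ^ 2 *
          (p r ^ 2 - (∑ i ∈ Finset.Icc (r + 1) d, p i) ^ 2)) := by
  have hv : IsIrwinLancaster d p v := hv
  have hpos : ∀ r ∈ Icc 1 (d - 1), 0 < p r := fun r hr => hp r (by grind)
  have hvr : ∀ r ∈ Icc 1 (d - 1), ∀ l ∈ Icc 1 (d - 1), l < r → v l r = 1 :=
    fun r hr l hl hlr => hv.apply_eq_one_of_lt hl (by grind) hlr
  refine ⟨fun l hl m hm r hr hlm hmr => ?_, fun l hl r hr hlr => ?_, fun r hr => ?_⟩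
  · have := (hpos r hr).ne'
    rw [hv.sum_mul_mul_mul hl hm hr hlm hmr.le, hvr r hr l hl (by omega), hvr r hr m hm hmr,
      hv.apply_self hr]
    field_simp
    ring
  · have hS : 0 ≤ ∑ i ∈ Icc (r + 1) d, p i := sum_nonneg fun i hi => (hp i (by grind)).le
    have heq : ∑ j ∈ Icc 1 d, v l j * v r j * v r j * p j =
        (∑ i ∈ Icc (r + 1) d, p i) ^ 2 / p r + ∑ i ∈ Icc (r + 1) d, p i := by
      have := (hpos r hr).ne'
      rw [hv.sum_mul_mul_mul hl hr hr hlr.le le_rfl, hvr r hr l hl hlr, hv.apply_self hr]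
      field_simp
    exact ⟨heq, heq ▸ by have := hpos r hr; positivity⟩
  · have := (hpos r hr).ne'
    rw [hv.sum_mul_mul_mul hr hr hr le_rfl le_rfl, hv.apply_self hr]
    field_simp
    ring

/-- Triple-product computations for the rescaled Irwin–Lancaster vectors `v⁽ʳ⁾`. -/
theorem stmt7 (d : ℕ) (hd : 1 ≤ d) (p : ℕ → ℝ) (v : ℕ → ℕ → ℝ)
    (hp : ∀ i ∈ Finset.Icc 1 d, 0 < p i)
    (hsum : ∑ i ∈ Finset.Icc 1 d, p i = 1)
    (hv : ∀ r ∈ Finset.Icc 1 (d - 1), ∀ j ∈ Finset.Icc 1 d,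
      v r j = if j < r then 0
        else if j = r then -(∑ i ∈ Finset.Icc (r + 1) d, p i) / p r
        else 1) :
    (∀ l ∈ Finset.Icc 1 (d - 1), ∀ m ∈ Finset.Icc 1 (d - 1),
      ∀ r ∈ Finset.Icc 1 (d - 1), l ≤ m → m < r →
      ∑ j ∈ Finset.Icc 1 d, v l j * v m j * v r j * p j = 0) ∧
    (∀ l ∈ Finset.Icc 1 (d - 1), ∀ r ∈ Finset.Icc 1 (d - 1), l < r →
      ∑ j ∈ Finset.Icc 1 d, v l j * v r j * v r j * p j =
        (∑ i ∈ Finset.Icc (r + 1) d, p i) ^ 2 / p r +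
          (∑ i ∈ Finset.Icc (r + 1) d, p i) ∧
      0 ≤ ∑ j ∈ Finset.Icc 1 d, v l j * v r j * v r j * p j) ∧
    (∀ r ∈ Finset.Icc 1 (d - 1),
      ∑ j ∈ Finset.Icc 1 d, v r j * v r j * v r j * p j =
        (∑ i ∈ Finset.Icc (r + 1) d, p i) / p r ^ 2 *
          (p r ^ 2 - (∑ i ∈ Finset.Icc (r + 1) d, p i) ^ 2)) :=
  stmt7_general d p v hp hv
end

section
/- The Irwin–Lancaster basis possesses the GKS property (all triple product sums $\sum_{j=1}^d u_j^{(l)} u_j^{(m)} u_j^{(r)} p_j \ge 0$ for $0 \le l, m, r \le d-1$) if and only if $p$ is strongly monotone: $p_{r+1} + \cdots + p_d \le p_r$ for every $1 \le r \le d-1$. -/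
open Finset

/-!
Every `u⁽ˡ⁾` with `l ≥ 1` vanishes below `l`, and every `u⁽ᵗ⁾` is constant on `j > t`. So for
`l ≤ m ≤ r` with `r ≥ 1` the triple sum only sees the coordinate `r` and the block `j > r`, on which
all three vectors are constant. If `m < r` it is a multiple of `⟨u⁽ʳ⁾, 1⟩ = 0`; if `l < m = r` it
is a nonnegative multiple of `‖u⁽ʳ⁾‖²`; and for `l = m = r` it equals
`(p_r² - S²) / (a_r A_r³ A_{r+1})` with `S = p_{r+1} + ⋯ + p_d`, whose sign is that of `p_r - S`.
-/

theorem sum_Icc_mul_eq_of_eq_zero_of_eq_const (F p : ℕ → ℝ) {d r : ℕ} (hr : 1 ≤ r)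
    (hrd : r ≤ d) (hzero : ∀ j ∈ Ico 1 r, F j = 0) (hconst : ∀ j ∈ Icc (r + 1) d, F j = F (r + 1)) :
    ∑ j ∈ Icc 1 d, F j * p j = F r * p r + F (r + 1) * ∑ j ∈ Icc (r + 1) d, p j := by
  have hlow : ∑ j ∈ Icc 1 d, F j * p j = ∑ j ∈ Icc r d, F j * p j := by
    refine (sum_subset (Icc_subset_Icc_left hr) fun j hj hjr => ?_).symm
    have hj := mem_Icc.1 hj
    rw [hzero j (mem_Ico.2 ⟨hj.1, by simp_all⟩), zero_mul]
  rw [hlow, ← insert_Icc_add_one_left_eq_Icc hrd, sum_insert (by simp), mul_sum]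
  exact congrArg _ (sum_congr rfl fun j hj => by rw [hconst j hj])

theorem forall_of_swap_of_forall_le {α : Type*} [LinearOrder α] {P : α → α → α → Prop}
    (h12 : ∀ a b c, P a b c → P b a c) (h23 : ∀ a b c, P a b c → P a c b)
    (hle : ∀ a b c, a ≤ b → b ≤ c → P a b c) (a b c : α) : P a b c := by
  rcases le_total a b with hab | hba <;> rcases le_total b c with hbc | hcb
  · exact hle a b c hab hbc
  · rcases le_total a c with hac | hca
    · exact h23 _ _ _ (hle a c b hac hcb)
    · exact h23 _ _ _ (h12 _ _ _ (hle c a b hca hab))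
  · rcases le_total a c with hac | hca
    · exact h12 _ _ _ (hle b a c hba hac)
    · exact h12 _ _ _ (h23 _ _ _ (hle b c a hbc hca))
  · exact h12 _ _ _ (h23 _ _ _ (h12 _ _ _ (hle c b a hcb hba)))

theorem helmert_diag_mul_add_succ_mul_eq_zero (a A B : ℝ) :
    -B / (a * A) * a ^ 2 + a / (A * B) * B ^ 2 = 0 := by
  rcases eq_or_ne a 0 with rfl | ha
  · simp
  rcases eq_or_ne B 0 with rfl | hB
  · simp
  field_simp
  ring

theorem helmert_cube_sum_nonneg_iff {a A B : ℝ} (ha : 0 < a) (hA : 0 < A) (hB : 0 < B) :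
    0 ≤ (-B / (a * A)) ^ 3 * a ^ 2 + (a / (A * B)) ^ 3 * B ^ 2 ↔ B ^ 2 ≤ a ^ 2 := by
  have hsum : (-B / (a * A)) ^ 3 * a ^ 2 + (a / (A * B)) ^ 3 * B ^ 2
      = (a ^ 2 - B ^ 2) * (a ^ 2 + B ^ 2) / (a * A ^ 3 * B) := by
    field_simp
    ring
  rw [hsum, le_div_iff₀ (by positivity), zero_mul, mul_nonneg_iff_of_pos_right (by positivity),
    sub_nonneg]

def tripleSum (d : ℕ) (p : ℕ → ℝ) (u : ℕ → ℕ → ℝ) (l m r : ℕ) : ℝ :=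
  ∑ j ∈ Icc 1 d, u l j * u m j * u r j * p j

def HasGKSProperty (d : ℕ) (p : ℕ → ℝ) (u : ℕ → ℕ → ℝ) : Prop :=
  ∀ l ∈ Icc 0 (d - 1), ∀ m ∈ Icc 0 (d - 1), ∀ r ∈ Icc 0 (d - 1), 0 ≤ tripleSum d p u l m r

theorem tripleSum_comm₁₂ (d : ℕ) (p : ℕ → ℝ) (u : ℕ → ℕ → ℝ) (l m r : ℕ) :
    tripleSum d p u l m r = tripleSum d p u m l r :=
  sum_congr rfl fun _ _ => by ring

theorem tripleSum_comm₂₃ (d : ℕ) (p : ℕ → ℝ) (u : ℕ → ℕ → ℝ) (l m r : ℕ) :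
    tripleSum d p u l m r = tripleSum d p u l r m :=
  sum_congr rfl fun _ _ => by ring

/-- The shape of Helmert-type bases; the last field says that `u⁽ʳ⁾` is `p`-orthogonal to the
constants. -/
structure IsStaircaseBasis (d : ℕ) (p : ℕ → ℝ) (u : ℕ → ℕ → ℝ) : Prop where
  eq_zero_of_lt : ∀ l ∈ Icc 1 (d - 1), ∀ j ∈ Icc 1 d, j < l → u l j = 0
  eq_succ_of_lt : ∀ l ∈ Icc 0 (d - 1), ∀ j ∈ Icc 1 d, l < j → u l j = u l (l + 1)
  succ_nonneg : ∀ l ∈ Icc 0 (d - 1), 0 ≤ u l (l + 1)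
  diag_mul_add_succ_mul_eq_zero :
    ∀ r ∈ Icc 1 (d - 1), u r r * p r + u r (r + 1) * ∑ j ∈ Icc (r + 1) d, p j = 0

namespace IsStaircaseBasis

variable {d : ℕ} {p : ℕ → ℝ} {u : ℕ → ℕ → ℝ}

theorem eq_of_lt_of_lt (hu : IsStaircaseBasis d p u) {t j k : ℕ} (ht : t ≤ d - 1)
    (hj : j ∈ Icc 1 d) (hk : k ∈ Icc 1 d) (htj : t < j) (htk : t < k) : u t j = u t k := by
  rw [hu.eq_succ_of_lt t (mem_Icc.2 ⟨t.zero_le, ht⟩) j hj htj,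
    hu.eq_succ_of_lt t (mem_Icc.2 ⟨t.zero_le, ht⟩) k hk htk]

theorem tripleSum_eq (hu : IsStaircaseBasis d p u) {l m r : ℕ} (hl : l ≤ r) (hm : m ≤ r)
    (hr : r ∈ Icc 1 (d - 1)) :
    tripleSum d p u l m r = u l r * u m r * u r r * p r
      + u l (r + 1) * u m (r + 1) * u r (r + 1) * ∑ j ∈ Icc (r + 1) d, p j := by
  obtain ⟨hr1, hrd⟩ := mem_Icc.1 hr
  have hsucc : r + 1 ∈ Icc 1 d := mem_Icc.2 ⟨by omega, by omega⟩
  refine sum_Icc_mul_eq_of_eq_zero_of_eq_const (fun j => u l j * u m j * u r j) p hr1 (by omega)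
    (fun j hj => ?_) (fun j hj => ?_)
  · obtain ⟨hj1, hjr⟩ := mem_Ico.1 hj
    simp only [hu.eq_zero_of_lt r hr j (mem_Icc.2 ⟨hj1, by omega⟩) hjr, mul_zero]
  · obtain ⟨hj1, hjd⟩ := mem_Icc.1 hj
    have hj' : j ∈ Icc 1 d := mem_Icc.2 ⟨by omega, hjd⟩
    simp only [hu.eq_of_lt_of_lt (t := l) (by omega) hj' hsucc (by omega) (by omega),
      hu.eq_of_lt_of_lt (t := m) (by omega) hj' hsucc (by omega) (by omega),
      hu.eq_of_lt_of_lt (t := r) (by omega) hj' hsucc (by omega) (by omega)]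

theorem tripleSum_self (hu : IsStaircaseBasis d p u) {r : ℕ} (hr : r ∈ Icc 1 (d - 1)) :
    tripleSum d p u r r r = u r r ^ 3 * p r + u r (r + 1) ^ 3 * ∑ j ∈ Icc (r + 1) d, p j := by
  rw [hu.tripleSum_eq le_rfl le_rfl hr]
  ring

theorem tripleSum_nonneg_of_le (hu : IsStaircaseBasis d p u) (hp : ∀ i ∈ Icc 1 d, 0 ≤ p i)
    (hcube : ∀ r ∈ Icc 1 (d - 1),
      0 ≤ u r r ^ 3 * p r + u r (r + 1) ^ 3 * ∑ j ∈ Icc (r + 1) d, p j)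
    {l m r : ℕ} (hlm : l ≤ m) (hmr : m ≤ r) (hr : r ≤ d - 1) : 0 ≤ tripleSum d p u l m r := by
  rcases Nat.eq_zero_or_pos r with rfl | hr0
  · obtain ⟨rfl, rfl⟩ : l = 0 ∧ m = 0 := ⟨by omega, by omega⟩
    refine sum_nonneg fun j hj => ?_
    have hc := hu.succ_nonneg 0 (mem_Icc.2 ⟨le_rfl, hr⟩)
    rw [hu.eq_succ_of_lt 0 (mem_Icc.2 ⟨le_rfl, hr⟩) j hj (mem_Icc.1 hj).1]
    have := hp j hj
    positivity
  have hrI : r ∈ Icc 1 (d - 1) := mem_Icc.2 ⟨hr0, hr⟩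
  have hrr : r ∈ Icc 1 d := mem_Icc.2 ⟨hr0, by omega⟩
  have hsucc : r + 1 ∈ Icc 1 d := mem_Icc.2 ⟨by omega, by omega⟩
  have hS : 0 ≤ ∑ j ∈ Icc (r + 1) d, p j :=
    sum_nonneg fun j hj => hp j (mem_Icc.2 ⟨by simp at hj; omega, (mem_Icc.1 hj).2⟩)
  rw [hu.tripleSum_eq (hlm.trans hmr) hmr hrI]
  rcases hmr.lt_or_eq with hmr | rfl
  · rw [hu.eq_of_lt_of_lt (t := l) (by omega) hrr hsucc (by omega) (by omega),
      hu.eq_of_lt_of_lt (t := m) (by omega) hrr hsucc (by omega) (by omega)]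
    refine le_of_eq ?_
    linear_combination (-(u l (r + 1) * u m (r + 1))) * hu.diag_mul_add_succ_mul_eq_zero r hrI
  rcases hlm.lt_or_eq with hlm | rfl
  · rw [hu.eq_of_lt_of_lt (t := l) (by omega) hrr hsucc hlm (by omega)]
    have hc := hu.succ_nonneg l (mem_Icc.2 ⟨l.zero_le, by omega⟩)
    rw [← hu.eq_succ_of_lt l (mem_Icc.2 ⟨l.zero_le, by omega⟩) _ hsucc (by omega)] at hc
    have hpr := hp m hrr
    calc (0 : ℝ) ≤ u l (m + 1) * (u m m ^ 2 * p m + u m (m + 1) ^ 2 * ∑ j ∈ Icc (m + 1) d, p j) := by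
          positivity
      _ = _ := by ring
  · convert hcube l hrI using 1
    ring

theorem hasGKSProperty_iff (hu : IsStaircaseBasis d p u) (hp : ∀ i ∈ Icc 1 d, 0 ≤ p i) :
    HasGKSProperty d p u ↔
      ∀ r ∈ Icc 1 (d - 1), 0 ≤ u r r ^ 3 * p r + u r (r + 1) ^ 3 * ∑ j ∈ Icc (r + 1) d, p j := by
  refine ⟨fun h r hr => ?_, fun hcube => ?_⟩
  · have hr0 : r ∈ Icc 0 (d - 1) := mem_Icc.2 ⟨r.zero_le, (mem_Icc.1 hr).2⟩
    exact hu.tripleSum_self hr ▸ h r hr0 r hr0 r hr0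
  · intro l hl m hm r hr
    refine forall_of_swap_of_forall_le
      (P := fun l m r => l ≤ d - 1 → m ≤ d - 1 → r ≤ d - 1 → 0 ≤ tripleSum d p u l m r)
      (fun a b c h hb ha hc => tripleSum_comm₁₂ d p u a b c ▸ h ha hb hc)
      (fun a b c h ha hc hb => tripleSum_comm₂₃ d p u a b c ▸ h ha hb hc)
      (fun a b c hab hbc _ _ hc => hu.tripleSum_nonneg_of_le hp hcube hab hbc hc)
      l m r (mem_Icc.1 hl).2 (mem_Icc.1 hm).2 (mem_Icc.1 hr).2

end IsStaircaseBasis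

noncomputable def irwinLancasterEntry (A a : ℕ → ℝ) (l j : ℕ) : ℝ :=
  if j < l then 0
  else if j = l then -(A (l + 1)) / (a l * A l)
  else a l / (A l * A (l + 1))

theorem irwinLancasterEntry_self (A a : ℕ → ℝ) (l : ℕ) :
    irwinLancasterEntry A a l l = -(A (l + 1)) / (a l * A l) := by
  simp [irwinLancasterEntry]

theorem irwinLancasterEntry_of_lt (A a : ℕ → ℝ) {l j : ℕ} (h : l < j) :
    irwinLancasterEntry A a l j = a l / (A l * A (l + 1)) := by
  simp [irwinLancasterEntry, h.not_gt, h.ne']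

section IrwinLancaster

variable {d : ℕ} {p A a : ℕ → ℝ} {u : ℕ → ℕ → ℝ}

theorem sq_of_eq_sqrt {x y : ℝ} (hy : 0 ≤ y) (h : x = √y) : x ^ 2 = y := by
  rw [h, Real.sq_sqrt hy]

theorem isStaircaseBasis_irwinLancaster (hp : ∀ i ∈ Icc 1 d, 0 ≤ p i)
    (ha : ∀ i, a i = √(p i)) (hA : ∀ i, A i = √(∑ j ∈ Icc i d, p j)) (hu0 : ∀ j, u 0 j = 1)
    (hu : ∀ l ∈ Icc 1 (d - 1), ∀ j ∈ Icc 1 d, u l j = irwinLancasterEntry A a l j) :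
    IsStaircaseBasis d p u where
  eq_zero_of_lt l hl j hj hjl := by rw [hu l hl j hj, irwinLancasterEntry, if_pos hjl]
  eq_succ_of_lt l hl j hj hlj := by
    rcases Nat.eq_zero_or_pos l with rfl | hl0
    · rw [hu0, hu0]
    have hlI : l ∈ Icc 1 (d - 1) := mem_Icc.2 ⟨hl0, (mem_Icc.1 hl).2⟩
    rw [hu l hlI j hj, hu l hlI (l + 1) (mem_Icc.2 ⟨by omega, by grind⟩),
      irwinLancasterEntry_of_lt A a hlj, irwinLancasterEntry_of_lt A a l.lt_succ_self]
  succ_nonneg l hl := by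
    rcases Nat.eq_zero_or_pos l with rfl | hl0
    · rw [hu0]; exact zero_le_one
    rw [hu l (mem_Icc.2 ⟨hl0, (mem_Icc.1 hl).2⟩) (l + 1) (mem_Icc.2 ⟨by omega, by grind⟩),
      irwinLancasterEntry_of_lt A a l.lt_succ_self, ha, hA, hA]
    positivity
  diag_mul_add_succ_mul_eq_zero r hr := by
    obtain ⟨hr1, hrd⟩ := mem_Icc.1 hr
    have hS : 0 ≤ ∑ j ∈ Icc (r + 1) d, p j :=
      sum_nonneg fun j hj => hp j (mem_Icc.2 ⟨by simp at hj; omega, (mem_Icc.1 hj).2⟩)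
    rw [hu r hr r (mem_Icc.2 ⟨hr1, by omega⟩), hu r hr (r + 1) (mem_Icc.2 ⟨by omega, by omega⟩),
      irwinLancasterEntry_self, irwinLancasterEntry_of_lt A a r.lt_succ_self,
      ← sq_of_eq_sqrt (hp r (mem_Icc.2 ⟨hr1, by omega⟩)) (ha r), ← sq_of_eq_sqrt hS (hA (r + 1))]
    exact helmert_diag_mul_add_succ_mul_eq_zero _ _ _

theorem irwinLancaster_cube_sum_nonneg_iff (hp : ∀ i ∈ Icc 1 d, 0 < p i)
    (ha : ∀ i, a i = √(p i)) (hA : ∀ i, A i = √(∑ j ∈ Icc i d, p j))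
    (hu : ∀ l ∈ Icc 1 (d - 1), ∀ j ∈ Icc 1 d, u l j = irwinLancasterEntry A a l j)
    {r : ℕ} (hr : r ∈ Icc 1 (d - 1)) :
    0 ≤ u r r ^ 3 * p r + u r (r + 1) ^ 3 * ∑ j ∈ Icc (r + 1) d, p j ↔
      ∑ j ∈ Icc (r + 1) d, p j ≤ p r := by
  obtain ⟨hr1, hrd⟩ := mem_Icc.1 hr
  have htail_pos : ∀ i ∈ Icc 1 d, 0 < ∑ j ∈ Icc i d, p j := fun i hi =>
    sum_pos (fun j hj => hp j (mem_Icc.2 ⟨(mem_Icc.1 hi).1.trans (mem_Icc.1 hj).1,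
      (mem_Icc.1 hj).2⟩)) ⟨i, mem_Icc.2 ⟨le_rfl, (mem_Icc.1 hi).2⟩⟩
  have hrr : r ∈ Icc 1 d := mem_Icc.2 ⟨hr1, by omega⟩
  have hsucc : r + 1 ∈ Icc 1 d := mem_Icc.2 ⟨by omega, by omega⟩
  have hA_pos : ∀ i ∈ Icc 1 d, 0 < A i := fun i hi => by
    rw [hA]; exact Real.sqrt_pos.2 (htail_pos i hi)
  rw [hu r hr r hrr, hu r hr (r + 1) hsucc, irwinLancasterEntry_self,
    irwinLancasterEntry_of_lt A a r.lt_succ_self,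
    ← sq_of_eq_sqrt (hp r hrr).le (ha r), ← sq_of_eq_sqrt (htail_pos _ hsucc).le (hA (r + 1))]
  exact helmert_cube_sum_nonneg_iff (by rw [ha]; exact Real.sqrt_pos.2 (hp r hrr))
    (hA_pos r hrr) (hA_pos _ hsucc)

end IrwinLancaster

theorem stmt8_general (d : ℕ) (p : ℕ → ℝ) (u : ℕ → ℕ → ℝ)
    (hp : ∀ i ∈ Finset.Icc 1 d, 0 < p i)
    (A a : ℕ → ℝ)
    (ha : ∀ i, a i = Real.sqrt (p i))
    (hA : ∀ i, A i = Real.sqrt (∑ j ∈ Finset.Icc i d, p j))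
    (hu0 : ∀ j, u 0 j = 1)
    (hu : ∀ l ∈ Finset.Icc 1 (d - 1), ∀ j ∈ Finset.Icc 1 d,
      u l j = if j < l then 0
        else if j = l then -(A (l + 1)) / (a l * A l)
        else a l / (A l * A (l + 1))) :
    (∀ l ∈ Finset.Icc 0 (d - 1), ∀ m ∈ Finset.Icc 0 (d - 1),
        ∀ r ∈ Finset.Icc 0 (d - 1),
        0 ≤ ∑ j ∈ Finset.Icc 1 d, u l j * u m j * u r j * p j) ↔
      (∀ r ∈ Finset.Icc 1 (d - 1), ∑ i ∈ Finset.Icc (r + 1) d, p i ≤ p r) := by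
  have hp₀ : ∀ i ∈ Icc 1 d, 0 ≤ p i := fun i hi => (hp i hi).le
  have hbasis : IsStaircaseBasis d p u := isStaircaseBasis_irwinLancaster hp₀ ha hA hu0 hu
  exact (hbasis.hasGKSProperty_iff hp₀).trans
    (forall₂_congr fun r hr => irwinLancaster_cube_sum_nonneg_iff hp ha hA hu hr)

/-- The Irwin–Lancaster basis has the GKS property (all triple product sums
nonnegative) if and only if `p` is strongly monotone. -/
theorem stmt8 (d : ℕ) (hd : 1 ≤ d) (p : ℕ → ℝ) (u : ℕ → ℕ → ℝ)
    (hp : ∀ i ∈ Finset.Icc 1 d, 0 < p i)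
    (hsum : ∑ i ∈ Finset.Icc 1 d, p i = 1)
    (A a : ℕ → ℝ)
    (ha : ∀ i, a i = Real.sqrt (p i))
    (hA : ∀ i, A i = Real.sqrt (∑ j ∈ Finset.Icc i d, p j))
    (hu0 : ∀ j, u 0 j = 1)
    (hu : ∀ l ∈ Finset.Icc 1 (d - 1), ∀ j ∈ Finset.Icc 1 d,
      u l j = if j < l then 0
        else if j = l then -(A (l + 1)) / (a l * A l)
        else a l / (A l * A (l + 1))) :
    (∀ l ∈ Finset.Icc 0 (d - 1), ∀ m ∈ Finset.Icc 0 (d - 1),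
        ∀ r ∈ Finset.Icc 0 (d - 1),
        0 ≤ ∑ j ∈ Finset.Icc 1 d, u l j * u m j * u r j * p j) ↔
      (∀ r ∈ Finset.Icc 1 (d - 1), ∑ i ∈ Finset.Icc (r + 1) d, p i ≤ p r) :=
  stmt8_general d p u hp A a ha hA hu0 hu
end

section
/- Let $K_\beta(i,j) = p_j\{1 + \sum_{l=1}^{d-1} \beta_l u_i^{(l)} u_j^{(l)}\}$ for $\beta \in \mathbb{R}^{d-1}$, where $\{u^{(l)}\}_{l=0}^{d-1}$ is orthonormal with respect to $p$ ($p_i > 0$, $u^{(0)}\equiv 1$). Then: (a) the Lancaster set $\mathcal{L} = \{\beta : K_\beta(i,j) \ge 0 \text{ for all } i,j\}$ is a nonempty compact convex subset of $\mathbb{R}^{d-1}$ containing $0$; (b) for $\beta, \gamma \in \mathcal{L}$, the matrix product satisfies $K_\beta K_\gamma = K_{\beta \circ \gamma}$ where $\circ$ is coordinatewise product, so $\mathcal{L}$ is closed under $\circ$ and $K_\beta K_\gamma = K_\gamma K_\beta$; (c) each $K_\beta$ with $\beta\in\mathcal{L}$ is a stochastic matrix, reversible with respect to $p$, with $K_\beta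 u^{(l)} = \beta_l u^{(l)}$ for $1 \le l \le d-1$. -/
open Finset

/-- `Kmat p u β` is the Lancaster kernel
`K_β(i,j) = p_j (1 + ∑_l β_l u_i^{(l)} u_j^{(l)})`. -/
def Kmat {d : ℕ} (p : Fin d → ℝ) (u : Fin (d - 1) → Fin d → ℝ)
    (β : Fin (d - 1) → ℝ) : Matrix (Fin d) (Fin d) ℝ :=
  Matrix.of fun i j => p j * (1 + ∑ l, β l * u l i * u l j)

section Helpers
variable {d : ℕ} {p : Fin d → ℝ} {u : Fin (d - 1) → Fin d → ℝ}

lemma Krow (hsum : ∑ i, p i = 1) (hconst : ∀ l, ∑ j, u l j * p j = 0)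
    (β : Fin (d-1) → ℝ) (i : Fin d) : ∑ j, Kmat p u β i j = 1 := by
  have : ∀ j, Kmat p u β i j = p j + ∑ l, β l * u l i * (u l j * p j) := by
    intro j
    simp only [Kmat, Matrix.of_apply, Finset.mul_sum, mul_add, mul_one]
    congr 1
    exact Finset.sum_congr rfl fun l _ => by ring
  simp_rw [this]
  rw [Finset.sum_add_distrib, hsum, Finset.sum_comm]
  simp_rw [← Finset.mul_sum, hconst, mul_zero, Finset.sum_const_zero, add_zero]

lemma Keig (horth : ∀ l m, ∑ j, u l j * u m j * p j = if l = m then 1 else 0)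
    (hconst : ∀ l, ∑ j, u l j * p j = 0)
    (β : Fin (d-1) → ℝ) (l : Fin (d-1)) (i : Fin d) :
    ∑ j, Kmat p u β i j * u l j = β l * u l i := by
  have : ∀ j, Kmat p u β i j * u l j
      = u l j * p j + ∑ m, β m * u m i * (u m j * u l j * p j) := by
    intro j
    simp only [Kmat, Matrix.of_apply]
    have h2 : p j * (1 + ∑ m, β m * u m i * u m j) * u l j
        = u l j * p j + ∑ m, (β m * u m i * u m j) * (u l j * p j) := by
      rw [← Finset.sum_mul]; ring
    rw [h2]
    congr 1
    exact Finset.sum_congr rfl fun m _ => by ring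
  simp_rw [this]
  rw [Finset.sum_add_distrib, hconst, Finset.sum_comm, zero_add]
  simp_rw [← Finset.mul_sum, horth]
  simp [Finset.sum_ite_eq', mul_comm]

lemma Kmul (hsum : ∑ i, p i = 1)
    (horth : ∀ l m, ∑ j, u l j * u m j * p j = if l = m then 1 else 0)
    (hconst : ∀ l, ∑ j, u l j * p j = 0)
    (β γ : Fin (d-1) → ℝ) :
    Kmat p u β * Kmat p u γ = Kmat p u (β * γ) := by
  ext i j
  simp only [Matrix.mul_apply, Kmat, Matrix.of_apply, Pi.mul_apply]
  have expand : ∀ k,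
      p k * (1 + ∑ l, β l * u l i * u l k) * (p j * (1 + ∑ l, γ l * u l k * u l j))
      = p j * (p k + (∑ l, β l * u l i * (u l k * p k))
          + (∑ l, γ l * u l j * (u l k * p k))
          + ∑ l, ∑ m, (β l * u l i * (γ m * u m j)) * (u l k * u m k * p k)) := by
    intro k
    have h3 : (∑ l, β l * u l i * u l k) * (∑ m, γ m * u m k * u m j) * p k
        = ∑ l, ∑ m, (β l * u l i * (γ m * u m j)) * (u l k * u m k * p k) := by
      rw [Finset.sum_mul_sum]
      simp_rw [Finset.sum_mul]
      exact Finset.sum_congr rfl fun l _ => Finset.sum_congr rfl fun m _ => by ring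
    have h1 : (∑ l, β l * u l i * u l k) * p k = ∑ l, β l * u l i * (u l k * p k) := by
      rw [Finset.sum_mul]; exact Finset.sum_congr rfl fun l _ => by ring
    have h2 : (∑ l, γ l * u l k * u l j) * p k = ∑ l, γ l * u l j * (u l k * p k) := by
      rw [Finset.sum_mul]; exact Finset.sum_congr rfl fun l _ => by ring
    rw [← h1, ← h2, ← h3]; ring
  rw [Finset.sum_congr rfl fun k _ => expand k, ← Finset.mul_sum]
  congr 1
  rw [Finset.sum_add_distrib, Finset.sum_add_distrib, Finset.sum_add_distrib, hsum]
  have hS1 : ∑ k, ∑ l, β l * u l i * (u l k * p k) = 0 := by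
    rw [Finset.sum_comm]
    simp_rw [← Finset.mul_sum, hconst, mul_zero, Finset.sum_const_zero]
  have hS2 : ∑ k, ∑ l, γ l * u l j * (u l k * p k) = 0 := by
    rw [Finset.sum_comm]
    simp_rw [← Finset.mul_sum, hconst, mul_zero, Finset.sum_const_zero]
  have hS3 : ∑ k, ∑ l, ∑ m, (β l * u l i * (γ m * u m j)) * (u l k * u m k * p k)
      = ∑ l, β l * u l i * (γ l * u l j) := by
    rw [Finset.sum_comm]
    refine Finset.sum_congr rfl fun l _ => ?_
    rw [Finset.sum_comm]
    simp_rw [← Finset.mul_sum, horth]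
    simp
  rw [hS1, hS2, hS3, add_zero, add_zero]
  congr 1
  exact Finset.sum_congr rfl fun l _ => by ring

lemma eig_bound (hd : 1 ≤ d) (hsum : ∑ i, p i = 1)
    (horth : ∀ l m, ∑ j, u l j * u m j * p j = if l = m then 1 else 0)
    (hconst : ∀ l, ∑ j, u l j * p j = 0)
    (β : Fin (d-1) → ℝ) (hβ : ∀ i j, 0 ≤ Kmat p u β i j) (l : Fin (d-1)) :
    |β l| ≤ 1 := by
  obtain ⟨i, -, hi⟩ := Finset.exists_max_image (Finset.univ : Finset (Fin d))
    (fun i => |u l i|) ⟨⟨0, hd⟩, Finset.mem_univ _⟩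
  have hpos : 0 < |u l i| := by
    rcases (abs_nonneg (u l i)).lt_or_eq with h | h
    · exact h
    · exfalso
      have hz : ∀ j, u l j = 0 := fun j =>
        abs_eq_zero.mp (le_antisymm (h ▸ hi j (Finset.mem_univ j)) (abs_nonneg _))
      have := horth l l
      simp [hz] at this
  have key : |β l| * |u l i| ≤ 1 * |u l i| := by
    calc |β l| * |u l i| = |β l * u l i| := (abs_mul _ _).symm
      _ = |∑ j, Kmat p u β i j * u l j| := by rw [Keig horth hconst]
      _ ≤ ∑ j, |Kmat p u β i j * u l j| := Finset.abs_sum_le_sum_abs _ _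
      _ = ∑ j, Kmat p u β i j * |u l j| := by
            refine Finset.sum_congr rfl fun j _ => ?_
            rw [abs_mul, abs_of_nonneg (hβ i j)]
      _ ≤ ∑ j, Kmat p u β i j * |u l i| :=
            Finset.sum_le_sum fun j _ =>
              mul_le_mul_of_nonneg_left (hi j (Finset.mem_univ j)) (hβ i j)
      _ = (∑ j, Kmat p u β i j) * |u l i| := (Finset.sum_mul _ _ _).symm
      _ = 1 * |u l i| := by rw [Krow hsum hconst]
  exact le_of_mul_le_mul_right (by linarith) hpos

lemma Kcont (i j : Fin d) :
    Continuous fun β : Fin (d-1) → ℝ => Kmat p u β i j := by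
  unfold Kmat
  simp only [Matrix.of_apply]
  exact continuous_const.mul (continuous_const.add (continuous_finset_sum _
    fun l _ => ((continuous_apply l).mul continuous_const).mul continuous_const))

lemma Kaffine (a b : ℝ) (hab : a + b = 1) (β γ : Fin (d-1) → ℝ) (i j : Fin d) :
    Kmat p u (a • β + b • γ) i j = a * Kmat p u β i j + b * Kmat p u γ i j := by
  simp only [Kmat, Matrix.of_apply, Pi.add_apply, Pi.smul_apply, smul_eq_mul]
  have : ∑ l, (a * β l + b * γ l) * u l i * u l j
      = a * ∑ l, β l * u l i * u l j + b * ∑ l, γ l * u l i * u l j := by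
    rw [Finset.mul_sum, Finset.mul_sum, ← Finset.sum_add_distrib]
    exact Finset.sum_congr rfl fun l _ => by ring
  rw [this]
  linear_combination (-(p j)) * hab

end Helpers

/-- Properties of the Lancaster set `𝓛 = {β : K_β ≥ 0}`: it is a nonempty compact
convex set containing `0`, closed under coordinatewise products, with
`K_β K_γ = K_{β∘γ}` (so the kernels commute), and each `K_β`, `β ∈ 𝓛`, is a
stochastic matrix reversible with respect to `p` having the `u⁽ˡ⁾` as right
eigenvectors with eigenvalues `β_l`. -/
theorem stmt19 (d : ℕ) (hd : 1 ≤ d) (p : Fin d → ℝ) (u : Fin (d - 1) → Fin d → ℝ)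
    (hp : ∀ i, 0 < p i) (hsum : ∑ i, p i = 1)
    (horth : ∀ l m, ∑ j, u l j * u m j * p j = if l = m then 1 else 0)
    (hconst : ∀ l, ∑ j, u l j * p j = 0) :
    let L : Set (Fin (d - 1) → ℝ) := {β | ∀ i j, 0 ≤ Kmat p u β i j}
    (0 : Fin (d - 1) → ℝ) ∈ L ∧ L.Nonempty ∧ IsCompact L ∧ Convex ℝ L ∧
      (∀ β ∈ L, ∀ γ ∈ L, β * γ ∈ L ∧
        Kmat p u β * Kmat p u γ = Kmat p u (β * γ) ∧
        Kmat p u β * Kmat p u γ = Kmat p u γ * Kmat p u β) ∧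
      (∀ β ∈ L,
        (∀ i, ∑ j, Kmat p u β i j = 1) ∧
        (∀ i j, p i * Kmat p u β i j = p j * Kmat p u β j i) ∧
        (∀ l i, ∑ j, Kmat p u β i j * u l j = β l * u l i)) := by
  intro L
  have hzero : (0 : Fin (d - 1) → ℝ) ∈ L := by
    intro i j
    simp only [Kmat, Matrix.of_apply, Pi.zero_apply, zero_mul, Finset.sum_const_zero,
      add_zero, mul_one]
    exact (hp j).le
  have hclosed : IsClosed L := by
    have : L = ⋂ i, ⋂ j, {β : Fin (d-1) → ℝ | 0 ≤ Kmat p u β i j} := by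
      ext β; simp [L, Set.mem_iInter]
    rw [this]
    exact isClosed_iInter fun i => isClosed_iInter fun j =>
      isClosed_le continuous_const (Kcont i j)
  have hbdd : L ⊆ Metric.closedBall 0 1 := by
    intro β hβ
    rw [Metric.mem_closedBall, dist_zero_right]
    refine (pi_norm_le_iff_of_nonneg zero_le_one).mpr fun l => ?_
    rw [Real.norm_eq_abs]
    exact eig_bound hd hsum horth hconst β hβ l
  refine ⟨hzero, ⟨0, hzero⟩, ?_, ?_, ?_, ?_⟩
  · exact Metric.isCompact_of_isClosed_isBounded hclosed
      (Metric.isBounded_closedBall.subset hbdd)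
  · intro β hβ γ hγ a b ha hb hab i j
    rw [Kaffine a b hab β γ i j]
    exact add_nonneg (mul_nonneg ha (hβ i j)) (mul_nonneg hb (hγ i j))
  · intro β hβ γ hγ
    have hm := Kmul hsum horth hconst β γ
    refine ⟨?_, hm, ?_⟩
    · intro i j
      rw [← hm, Matrix.mul_apply]
      exact Finset.sum_nonneg fun k _ => mul_nonneg (hβ i k) (hγ k j)
    · rw [hm, Kmul hsum horth hconst γ β, mul_comm β γ]
  · intro β hβ
    refine ⟨Krow hsum hconst β, ?_, fun l i => Keig horth hconst β l i⟩
    intro i j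
    simp only [Kmat, Matrix.of_apply]
    have : (∑ l, β l * u l i * u l j) = ∑ l, β l * u l j * u l i :=
      Finset.sum_congr rfl fun l _ => by ring
    rw [this]; ring
end
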